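/- arXiv:1204.0530 — 2 statements merged into one kernel-verified Lean document; each statement's English description precedes it below -/
import Mathlib

section
/- Let X be a nonempty proper geodesic metric space and let the group G act on X by isometries. Suppose the action is properly discontinuous (for every compact set K ⊆ X, the set {g ∈ G : (g • K) ∩ K ≠ ∅} is finite) and cocompact (there is a compact set K ⊆ X with ⋃_{g ∈ G} g • K = X). Then G is finitely generated. -/
/-!
Fix a basepoint `y`. Cocompactness puts every point of `X` within some distance `R` of the orbit
`G • y`, and proper discontinuity makes `S = {g | dist y (g • y) ≤ 2R + 1}` finite. To write `g`
as a word in `S`, walk along a geodesic from `y` to `g • y`: the point at distance `R + 1` before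
its end lies within `R` of some `h • y`, so `g = h * (h⁻¹ * g)` with `h⁻¹ * g ∈ S` and `h • y`
at least one unit closer to `y` than `g • y`. Induction on `⌈dist y (g • y)⌉` finishes.
-/

open Pointwise Metric

theorem exists_dist_eq_sub_of_geodesic {X : Type*} [PseudoMetricSpace X] {x z : X}
    (hγ : ∃ γ : ℝ → X, γ 0 = x ∧ γ (dist x z) = z ∧
      ∀ s ∈ Set.Icc (0 : ℝ) (dist x z), ∀ t ∈ Set.Icc (0 : ℝ) (dist x z),
        dist (γ s) (γ t) = |s - t|)
    {t : ℝ} (ht₀ : 0 ≤ t) (ht : t ≤ dist x z) :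
    ∃ p, dist x p = t ∧ dist p z = dist x z - t := by
  obtain ⟨γ, hγ₀, hγ₁, hγ⟩ := hγ
  have hd : 0 ≤ dist x z := ht₀.trans ht
  refine ⟨γ t, ?_, ?_⟩
  · rw [← hγ₀, hγ 0 ⟨le_rfl, hd⟩ t ⟨ht₀, ht⟩, abs_sub_comm, abs_of_nonneg (by linarith)]
    ring
  · rw [← hγ₁, hγ t ⟨ht₀, ht⟩ _ ⟨hd, le_rfl⟩, hγ₁, abs_sub_comm, abs_of_nonneg (by linarith)]

theorem finite_setOf_dist_smul_le {G X : Type*} [PseudoMetricSpace X] [ProperSpace X] [SMul G X]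
    (hpd : ∀ K : Set X, IsCompact K → {g : G | (g • K ∩ K).Nonempty}.Finite) (y : X) (r : ℝ) :
    {g : G | dist y (g • y) ≤ r}.Finite :=
  (hpd _ (isCompact_closedBall y r)).subset fun g hg =>
    ⟨g • y, Set.smul_mem_smul_set (mem_closedBall_self (dist_nonneg.trans hg)),
      mem_closedBall.2 (by rwa [dist_comm])⟩

section IsometricAction

variable {G X : Type*} [Group G] [PseudoMetricSpace X] [MulAction G X] [IsIsometricSMul G X]

theorem dist_smul_smul_eq_dist_inv_mul_smul (y : X) (h g : G) :
    dist (h • y) (g • y) = dist y ((h⁻¹ * g) • y) := by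
  rw [← dist_smul h⁻¹, inv_smul_smul, mul_smul]

theorem exists_forall_dist_smul_le_of_iUnion_smul_eq_univ {K : Set X} (hK : IsCompact K)
    (hcover : ⋃ g : G, g • K = Set.univ) (y : X) :
    ∃ R : ℝ, ∀ p : X, ∃ h : G, dist p (h • y) ≤ R := by
  obtain ⟨R, hR⟩ := hK.isBounded.subset_closedBall y
  refine ⟨R, fun p => ?_⟩
  obtain ⟨h, hp⟩ := Set.mem_iUnion.1 (hcover ▸ Set.mem_univ p)
  rw [Set.mem_smul_set_iff_inv_smul_mem] at hp
  exact ⟨h, by rw [← dist_smul h⁻¹, inv_smul_smul]; exact hR hp⟩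

variable (hmid : ∀ x z : X, ∀ t : ℝ, 0 ≤ t → t ≤ dist x z →
    ∃ p, dist x p = t ∧ dist p z = dist x z - t)
  {y : X} {R : ℝ} (hR : ∀ p : X, ∃ h : G, dist p (h • y) ≤ R)
include hmid hR

theorem exists_mul_eq_of_dist_smul_gt {g : G} (hg : 2 * R + 1 < dist y (g • y)) :
    ∃ h s : G, g = h * s ∧ dist y (h • y) ≤ dist y (g • y) - 1 ∧ dist y (s • y) ≤ 2 * R + 1 := by
  have hR₀ : 0 ≤ R := by
    obtain ⟨h, hh⟩ := hR y
    exact dist_nonneg.trans hh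
  obtain ⟨p, hyp, hpg⟩ := hmid y (g • y) (dist y (g • y) - (R + 1)) (by linarith) (by linarith)
  obtain ⟨h, hph⟩ := hR p
  refine ⟨h, h⁻¹ * g, (mul_inv_cancel_left h g).symm, ?_, ?_⟩
  · linarith [dist_triangle y p (h • y)]
  · rw [← dist_smul_smul_eq_dist_inv_mul_smul]
    linarith [dist_triangle (h • y) p (g • y), dist_comm (h • y) p]

theorem closure_setOf_dist_smul_le_eq_top :
    Subgroup.closure {g : G | dist y (g • y) ≤ 2 * R + 1} = ⊤ := by
  set S := {g : G | dist y (g • y) ≤ 2 * R + 1}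
  obtain ⟨h₀, hh₀⟩ := hR y
  suffices h : ∀ n : ℕ, ∀ g : G, dist y (g • y) ≤ n → g ∈ Subgroup.closure S from
    eq_top_iff.2 fun g _ => h _ g (Nat.le_ceil _)
  intro n
  induction n with
  | zero =>
    intro g hg
    push_cast at hg
    exact Subgroup.subset_closure (show dist y (g • y) ≤ 2 * R + 1 by
      linarith [dist_nonneg (x := y) (y := h₀ • y)])
  | succ n ih =>
    intro g hg
    by_cases hgS : g ∈ S
    · exact Subgroup.subset_closure hgS
    obtain ⟨h, s, rfl, hh, hs⟩ := exists_mul_eq_of_dist_smul_gt hmid hR (not_le.1 hgS)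
    push_cast at hg
    exact mul_mem (ih h (by linarith)) (Subgroup.subset_closure hs)

end IsometricAction

/-- **Švarc–Milnor lemma, finite generation part.**
If a group `G` acts by isometries on a nonempty proper geodesic metric space `X`,
properly discontinuously and cocompactly, then `G` is finitely generated. -/
theorem svarc_milnor_fg
    {G : Type*} [Group G] {X : Type*} [MetricSpace X] [Nonempty X] [ProperSpace X]
    [MulAction G X]
    -- `X` is geodesic
    (hgeo : ∀ x y : X, ∃ γ : ℝ → X, γ 0 = x ∧ γ (dist x y) = y ∧
      ∀ s ∈ Set.Icc (0 : ℝ) (dist x y), ∀ t ∈ Set.Icc (0 : ℝ) (dist x y),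
        dist (γ s) (γ t) = |s - t|)
    -- the action is by isometries
    (hiso : ∀ (g : G) (x y : X), dist (g • x) (g • y) = dist x y)
    -- the action is properly discontinuous
    (hpd : ∀ K : Set X, IsCompact K → {g : G | (g • K ∩ K).Nonempty}.Finite)
    -- the action is cocompact
    (hcc : ∃ K : Set X, IsCompact K ∧ ⋃ g : G, g • K = Set.univ) :
    Group.FG G := by
  have : IsIsometricSMul G X := ⟨fun g => Isometry.of_dist_eq (hiso g)⟩
  obtain ⟨K, hK, hcover⟩ := hcc
  obtain ⟨y⟩ := ‹Nonempty X›
  obtain ⟨R, hR⟩ := exists_forall_dist_smul_le_of_iUnion_smul_eq_univ hK hcover y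
  have hmid : ∀ x z : X, ∀ t : ℝ, 0 ≤ t → t ≤ dist x z →
      ∃ p, dist x p = t ∧ dist p z = dist x z - t :=
    fun x z _ ht₀ ht => exists_dist_eq_sub_of_geodesic (hgeo x z) ht₀ ht
  exact Group.fg_iff.2 ⟨_, closure_setOf_dist_smul_le_eq_top hmid hR,
    finite_setOf_dist_smul_le hpd y _⟩
end

section
/- Let G be an abelian group acting faithfully by isometries on a metric space X (d(g • x, g • y) = d(x, y) for all g, x, y, and the only element acting as the identity on X is 1). Suppose that every closed ball in X contains only finitely many points, and that the action has only finitely many orbits. Then for every point v ∈ X, the stabilizer G_v = {g ∈ G : g • v = v} is finite. -/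
/-!
Two elements of an abelian group that agree at one point agree on its whole orbit, since
`g • (k • x) = k • (g • x)`. So a faithful action of `G` with finitely many orbits embeds any
subgroup `H` into the product, over a set of orbit representatives `xᵢ`, of the `H`-orbits of
the `xᵢ`. For `H = G_v` acting by isometries, the `H`-orbit of `xᵢ` lies in the finite ball
of radius `d(xᵢ, v)` around `v`.
-/

namespace MulAction

section CommGroup

variable {G X : Type*} [CommGroup G] [MulAction G X]

theorem eq_of_forall_smul_orbitRel_out_eq [FaithfulSMul G X] {g g' : G}
    (h : ∀ q : orbitRel.Quotient G X, g • q.out = g' • q.out) : g = g' := by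
  refine eq_of_smul_eq_smul (α := X) fun x => ?_
  obtain ⟨k, hk⟩ : (Quotient.mk (orbitRel G X) x).out ∈ orbit G x :=
    Quotient.mk_out (s := orbitRel G X) x
  have hx : x = k⁻¹ • (Quotient.mk (orbitRel G X) x).out := by rw [← hk, inv_smul_smul]
  rw [hx, smul_comm g, smul_comm g', h]

theorem _root_.Subgroup.finite_of_forall_orbit_finite [FaithfulSMul G X]
    [Finite (orbitRel.Quotient G X)] (H : Subgroup G) (hH : ∀ x : X, (orbit H x).Finite) :
    Finite H := by
  have := fun q : orbitRel.Quotient G X => (hH q.out).to_subtype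
  refine Finite.of_injective
    (fun h (q : orbitRel.Quotient G X) => (⟨h • q.out, mem_orbit _ _⟩ : orbit H q.out)) ?_
  intro h h' hh
  exact Subtype.ext <| eq_of_forall_smul_orbitRel_out_eq fun q =>
    congrArg Subtype.val (congrFun hh q)

end CommGroup

theorem orbit_stabilizer_subset_closedBall {G X : Type*} [Group G]
    [PseudoMetricSpace X] [MulAction G X] [IsIsometricSMul G X] (v x : X) :
    orbit (stabilizer G v) x ⊆ Metric.closedBall v (dist x v) := by
  rintro _ ⟨g, rfl⟩
  rw [Metric.mem_closedBall, ← dist_smul (g : G) x v, mem_stabilizer_iff.mp g.2]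
  exact le_rfl

end MulAction

/-- If an abelian group `G` acts faithfully by isometries on a metric space `X`
whose closed balls are all finite, with only finitely many orbits, then every
point stabilizer is finite. -/
theorem stabilizer_finite_of_abelian_faithful_isometric
    {G : Type*} [CommGroup G] {X : Type*} [MetricSpace X] [MulAction G X]
    -- the action is by isometries
    (hiso : ∀ (g : G) (x y : X), dist (g • x) (g • y) = dist x y)
    -- the action is faithful
    (hfaith : ∀ g : G, (∀ x : X, g • x = x) → g = 1)
    -- every closed ball in `X` is finite
    (hball : ∀ (x : X) (r : ℝ), (Metric.closedBall x r).Finite)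
    -- there are only finitely many orbits
    (horb : Finite (MulAction.orbitRel.Quotient G X)) :
    ∀ v : X, {g : G | g • v = v}.Finite := by
  intro v
  have : IsIsometricSMul G X := ⟨fun g => Isometry.of_dist_eq (hiso g)⟩
  have : FaithfulSMul G X := ⟨fun h => inv_mul_eq_one.mp <| hfaith _ fun x => by
    rw [mul_smul, ← h, inv_smul_smul]⟩
  have := (MulAction.stabilizer G v).finite_of_forall_orbit_finite fun x =>
    (hball v _).subset (MulAction.orbit_stabilizer_subset_closedBall v x)
  exact Set.toFinite (MulAction.stabilizer G v : Set G)
end
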